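/- Let G be a finite simple graph on n vertices. The hairing H(G) is antipalindromic if and only if H(G) is bipartite and n is odd. -/

import Mathlib

/-!
Ordering the vertices of `H(G)` as (vertices of `G`, pendants), its adjacency matrix is the block
matrix `B = [[A, 1], [1, 0]]`. Schur complements express both `det (1 - λB)` (the reversal of
`χ_B`) and `det (λ + B) = χ_{-B}(λ)` through `det (λ² - 1 + λA)`, which gives
`reverse χ_B = (-1)ⁿ χ_{-B}`. So `H(G)` is antipalindromic iff `(-1)ⁿ χ_{-B} = -χ_B`; as both
polynomials are monic this says exactly that `n` is odd and `χ_{-B} = χ_B`. For any graph the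
latter is equivalent to bipartiteness: a `±1` diagonal conjugation takes `B` to `-B` when the graph
is bipartite, and conversely `χ_{-B} = χ_B` kills the odd traces `tr Bᵏ`, which count closed walks.
-/

open Polynomial

/-- The characteristic polynomial (of the adjacency matrix) of a finite simple graph. -/
noncomputable def charPoly {V : Type*} [Finite V] (G : SimpleGraph V) : Polynomial ℤ :=
  letI := Fintype.ofFinite V
  letI := Classical.decEq V
  letI := Classical.decRel G.Adj
  (SimpleGraph.adjMatrix ℤ G).charpoly

/-- `G` is antipalindromic: writing `χ_G(λ) = Σ a_i λ^(n-i)`, we have `a_i = -a_(n-i)`. -/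
def IsAntipalindromic {V : Type*} [Finite V] (G : SimpleGraph V) : Prop :=
  ∀ i ≤ Nat.card V, (charPoly G).coeff i = -(charPoly G).coeff (Nat.card V - i)

/-- The hairing of `G`: attach a pendant vertex to every vertex of `G`.
Vertices `(u, false)` form the original graph and `(u, true)` is the pendant at `u`. -/
def hairing {V : Type*} (G : SimpleGraph V) : SimpleGraph (V × Bool) where
  Adj a b := (a.2 = false ∧ b.2 = false ∧ G.Adj a.1 b.1) ∨ (a.1 = b.1 ∧ a.2 ≠ b.2)
  symm := by
    constructor
    rintro a b (⟨ha, hb, hadj⟩ | ⟨h1, h2⟩)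
    · exact Or.inl ⟨hb, ha, hadj.symm⟩
    · exact Or.inr ⟨h1.symm, h2.symm⟩
  loopless := by
    constructor
    rintro a (⟨_, _, hadj⟩ | ⟨_, h⟩)
    · exact (G.ne_of_adj hadj) rfl
    · exact h rfl

open Matrix

namespace Polynomial

variable {R : Type*} [Ring R]

lemma reverse_eq_neg_iff {p : R[X]} :
    p.reverse = -p ↔ ∀ i ≤ p.natDegree, p.coeff i = -p.coeff (p.natDegree - i) := by
  constructor
  · intro h i hi
    have := congrArg (coeff · (p.natDegree - i)) h
    simpa [coeff_reverse, revAt_le (Nat.sub_le _ _), Nat.sub_sub_self hi] using this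
  · intro h
    ext k
    rw [coeff_reverse, coeff_neg]
    by_cases hk : k ≤ p.natDegree
    · rw [revAt_le hk, h _ (Nat.sub_le _ _), Nat.sub_sub_self hk]
    · rw [revAt_eq_self_of_lt (not_le.1 hk), coeff_eq_zero_of_natDegree_lt (not_le.1 hk), neg_zero]

lemma Monic.neg_one_pow_mul_eq_neg_iff [NeZero (2 : R)] {p q : R[X]} (hp : p.Monic)
    (hq : q.Monic) (m : ℕ) : (-1) ^ m * p = -q ↔ Odd m ∧ p = q := by
  rcases m.even_or_odd with hm | hm
  · rw [hm.neg_one_pow, one_mul, iff_false_intro (Nat.not_odd_iff_even.2 hm), false_and,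
      iff_false]
    intro h
    have := congrArg (·.leadingCoeff) h
    rw [leadingCoeff_neg, hp.leadingCoeff, hq.leadingCoeff, eq_neg_iff_add_eq_zero,
      one_add_one_eq_two] at this
    exact two_ne_zero this
  · rw [hm.neg_one_pow, neg_one_mul, neg_inj]
    exact ⟨fun h => ⟨hm, h⟩, And.right⟩

end Polynomial

namespace Matrix

variable {R : Type*} [CommRing R] {n : Type*} [Fintype n] [DecidableEq n]

lemma det_fromBlocks_one_one_scalar {d : R} (hd : IsRegular d) (P : Matrix n n R) :
    (fromBlocks P 1 1 (scalar n d)).det = (d • P - 1).det := by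
  have hmul : fromBlocks P 1 1 (scalar n d) * fromBlocks (scalar n d) 0 (-1) 1 =
      fromBlocks (d • P - 1) 1 0 (scalar n d) := by
    simp [fromBlocks_multiply, smul_eq_mul_diagonal, sub_eq_add_neg]
  have h := congrArg det hmul
  rw [det_mul, det_fromBlocks_zero₁₂, det_fromBlocks_zero₂₁, det_one, mul_one] at h
  exact (hd.pow (Fintype.card n)).right (by simpa using h)

lemma charpoly_neg_fromBlocks_one_one_zero (A : Matrix n n R) :
    (-fromBlocks A 1 1 (0 : Matrix n n R)).charpoly =
      ((X : R[X]) • (scalar n (X : R[X]) + A.map C) - 1).det := by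
  rw [charpoly, ← det_fromBlocks_one_one_scalar isRegular_X]
  congr 1
  ext (i | i) (j | j) <;> by_cases h : i = j <;> simp [h]

lemma charpolyRev_fromBlocks_one_one_zero (A : Matrix n n R) :
    (fromBlocks A 1 1 (0 : Matrix n n R)).charpolyRev =
      (-1) ^ Fintype.card n * ((X : R[X]) • (scalar n (X : R[X]) + A.map C) - 1).det := by
  have h : (1 : Matrix (n ⊕ n) (n ⊕ n) R[X]) - (X : R[X]) • (fromBlocks A 1 1 0).map C =
      fromBlocks (1 - (X : R[X]) • A.map C) (-scalar n X) (-scalar n X) 1 := by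
    ext (i | i) (j | j) <;> by_cases h : i = j <;> simp [h]
  rw [charpolyRev, h, det_fromBlocks_one₂₂, ← det_neg]
  congr 1
  ext i j
  by_cases h : i = j <;> simp [h]
  ring

lemma reverse_charpoly_fromBlocks_one_one_zero (A : Matrix n n R) :
    (fromBlocks A 1 1 (0 : Matrix n n R)).charpoly.reverse =
      (-1) ^ Fintype.card n * (-fromBlocks A 1 1 (0 : Matrix n n R)).charpoly := by
  rw [reverse_charpoly, charpolyRev_fromBlocks_one_one_zero,
    charpoly_neg_fromBlocks_one_one_zero]

namespace IsHermitian

variable {𝕜 : Type*} [RCLike 𝕜] {A B : Matrix n n 𝕜}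

lemma charpoly_pow_eq (hA : A.IsHermitian) (k : ℕ) :
    (A ^ k).charpoly = ∏ i, (X - C ((hA.eigenvalues i ^ k : ℝ) : 𝕜)) := by
  rw [← cfc_pow_id (R := ℝ) A k hA.isSelfAdjoint, hA.charpoly_cfc_eq]

lemma trace_pow_eq_of_charpoly_eq (hA : A.IsHermitian) (hB : B.IsHermitian)
    (h : A.charpoly = B.charpoly) (k : ℕ) : (A ^ k).trace = (B ^ k).trace := by
  have hk : (A ^ k).charpoly = (B ^ k).charpoly := by
    rw [hA.charpoly_pow_eq, hB.charpoly_pow_eq, (eigenvalues_eq_eigenvalues_iff hA hB).2 h]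
  rw [← neg_neg (A ^ k).trace, ← coeff_charpolyRev_eq_neg_trace, ← reverse_charpoly, hk,
    reverse_charpoly, coeff_charpolyRev_eq_neg_trace, neg_neg]

end IsHermitian

end Matrix

namespace SimpleGraph

variable {V : Type*} [Fintype V] [DecidableEq V] {G : SimpleGraph V} [DecidableRel G.Adj]

lemma trace_adjMatrix_pow (R : Type*) [Semiring R] (k : ℕ) :
    ((G.adjMatrix R) ^ k).trace =
      ((∑ u, Fintype.card {p : G.Walk u u | p.length = k} : ℕ) : R) := by
  simp [Matrix.trace, adjMatrix_pow_apply_eq_card_walk]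

lemma colorable_two_of_trace_adjMatrix_pow_odd (R : Type*) [Semiring R] [CharZero R]
    (h : ∀ k, Odd k → ((G.adjMatrix R) ^ k).trace = 0) : G.Colorable 2 := by
  refine two_colorable_iff_forall_loop_even.2 fun u p => Nat.not_odd_iff_even.1 fun hp => ?_
  have := h _ hp
  rw [trace_adjMatrix_pow, Nat.cast_eq_zero, Finset.sum_eq_zero_iff] at this
  exact (Fintype.card_eq_zero_iff.1 (this u (Finset.mem_univ u))).elim ⟨p, rfl⟩

lemma Colorable.charpoly_neg_adjMatrix {R : Type*} [CommRing R] (hG : G.Colorable 2) :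
    (-G.adjMatrix R).charpoly = (G.adjMatrix R).charpoly := by
  obtain ⟨c⟩ := hG
  let s : V → R := fun v => if c v = 0 then 1 else -1
  have hs : ∀ v, s v * s v = 1 := fun v => by by_cases h : c v = 0 <;> simp [s, h]
  have hs_adj : ∀ {u v}, G.Adj u v → s u * s v = -1 := fun huv => by
    have key : ∀ a b : Fin 2, a ≠ b →
        (if a = 0 then (1 : R) else -1) * (if b = 0 then 1 else -1) = -1 := by
      intro a b hab
      fin_cases a <;> fin_cases b <;> simp at hab ⊢
    exact key _ _ (c.valid huv)
  have hDD : diagonal s * diagonal s = 1 := by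
    rw [diagonal_mul_diagonal, ← diagonal_one]
    exact congrArg diagonal (funext hs)
  have hconj : diagonal s * G.adjMatrix R * diagonal s = -G.adjMatrix R := by
    ext u v
    rw [mul_diagonal, diagonal_mul, neg_apply]
    by_cases huv : G.Adj u v
    · simp [huv, hs_adj huv]
    · simp [huv]
  rw [← hconj, charpoly_mul_comm, ← Matrix.mul_assoc, hDD, Matrix.one_mul]

lemma charpoly_neg_adjMatrix_eq_iff :
    (-G.adjMatrix ℤ).charpoly = (G.adjMatrix ℤ).charpoly ↔ G.Colorable 2 := by
  refine ⟨fun h => ?_, Colorable.charpoly_neg_adjMatrix⟩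
  have hmap : (G.adjMatrix ℤ).map (Int.castRingHom ℝ) = G.adjMatrix ℝ := by
    ext u v
    by_cases huv : G.Adj u v <;> simp [huv]
  have hℝ : (-G.adjMatrix ℝ).charpoly = (G.adjMatrix ℝ).charpoly := by
    rw [← hmap, ← Matrix.map_neg _ (map_neg _), charpoly_map, charpoly_map, h]
  refine colorable_two_of_trace_adjMatrix_pow_odd ℝ fun k hk => ?_
  have := ((G.isHermitian_adjMatrix ℝ).neg.trace_pow_eq_of_charpoly_eq
    (G.isHermitian_adjMatrix ℝ) hℝ k)
  rw [neg_pow, hk.neg_one_pow, neg_one_mul, trace_neg] at this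
  linarith

end SimpleGraph

section Hairing

def prodBoolEquivSum (V : Type*) : V × Bool ≃ V ⊕ V :=
  (Equiv.prodComm V Bool).trans (Equiv.boolProdEquivSum V)

variable {V : Type*} [DecidableEq V] (G : SimpleGraph V) [DecidableRel G.Adj]
  [DecidableRel (hairing G).Adj]

lemma reindex_adjMatrix_hairing (R : Type*) [Ring R] :
    reindex (prodBoolEquivSum V) (prodBoolEquivSum V) ((hairing G).adjMatrix R) =
      fromBlocks (G.adjMatrix R) 1 1 0 := by
  ext (i | i) (j | j) <;> by_cases h : i = j <;>
    simp [prodBoolEquivSum, hairing, SimpleGraph.adjMatrix_apply, h]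

lemma reverse_charpoly_adjMatrix_hairing [Fintype V] (R : Type*) [CommRing R] :
    ((hairing G).adjMatrix R).charpoly.reverse =
      (-1) ^ Fintype.card V * (-(hairing G).adjMatrix R).charpoly := by
  have hneg : reindex (prodBoolEquivSum V) (prodBoolEquivSum V) (-(hairing G).adjMatrix R) =
      -fromBlocks (G.adjMatrix R) 1 1 0 := by
    rw [← reindex_adjMatrix_hairing]
    rfl
  rw [← charpoly_reindex (prodBoolEquivSum V), ← charpoly_reindex (prodBoolEquivSum V) (-_),
    reindex_adjMatrix_hairing, hneg, reverse_charpoly_fromBlocks_one_one_zero]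

end Hairing

lemma charPoly_eq_charpoly_adjMatrix {V : Type*} [Fintype V] [DecidableEq V] (G : SimpleGraph V)
    [DecidableRel G.Adj] : charPoly G = (G.adjMatrix ℤ).charpoly := by
  unfold charPoly
  congr!

/-- The hairing `H(G)` of a finite simple graph on `n` vertices is antipalindromic iff
`H(G)` is bipartite and `n` is odd. -/
theorem hairing_antipalindromic_iff {V : Type*} [Finite V] (G : SimpleGraph V) :
    IsAntipalindromic (hairing G) ↔ (hairing G).Colorable 2 ∧ Odd (Nat.card V) := by
  classical
  have := Fintype.ofFinite V
  have hdeg : ((hairing G).adjMatrix ℤ).charpoly.natDegree = Nat.card (V × Bool) := by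
    simp [Nat.card_eq_fintype_card]
  rw [IsAntipalindromic, charPoly_eq_charpoly_adjMatrix, ← hdeg, ← reverse_eq_neg_iff,
    reverse_charpoly_adjMatrix_hairing, (charpoly_monic _).neg_one_pow_mul_eq_neg_iff
      (charpoly_monic _), SimpleGraph.charpoly_neg_adjMatrix_eq_iff, Nat.card_eq_fintype_card,
    and_comm]
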